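/- arXiv:2311.11333 — 2 statements merged into one kernel-verified Lean document; each statement's English description precedes it below -/
import Mathlib

section
/- Let n ≥ 2, let 1 ≤ k < l ≤ n be integers, and let κ ∈ ℝ^n satisfy σ_i(κ) > 0 for all 1 ≤ i ≤ l. Then equality H_{k-1}(κ)·H_l(κ) = H_k(κ)·H_{l-1}(κ) holds if and only if there exists a constant c > 0 such that κ_i = c for all i, i.e., κ = c·(1,…,1). -/
open Finset

/-- The `r`-th elementary symmetric polynomial of `κ = (κ_1, …, κ_n)`. -/
noncomputable def esymm (n : ℕ) (κ : Fin n → ℝ) (r : ℕ) : ℝ :=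
  ∑ s ∈ powersetCard r (univ : Finset (Fin n)), ∏ i ∈ s, κ i

/-- The normalized `r`-th mean curvature `H_r(κ) = σ_r(κ) / C(n,r)`. -/
noncomputable def Hmc (n : ℕ) (κ : Fin n → ℝ) (r : ℕ) : ℝ :=
  esymm n κ r / (n.choose r)

/-!
Newton's inequality `H_r H_{r+2} ≤ H_{r+1}²` holds for every finite family of reals. Replacing the
family by the roots of the derivative of `∏ (X - x)` (real by Rolle's theorem) keeps every `H_j` of
low enough index, so it suffices to treat `r + 2` numbers `x_i`. For these, the products
`P_i = ∏_{k ≠ i} x_k` satisfy `σ₁(P) = σ_{r+1}(x)` and `σ₂(P) = σ_r(x) σ_{r+2}(x)`, and the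
inequality becomes `2 m σ₂(P) ≤ (m - 1) σ₁(P)²`, which says that the variance of the `P_i` is
nonnegative. In the equality case all `P_i` agree, hence so do the `x_i = σ_{r+2}(x) / P_i`.

On `Γ_l⁺` all `H_j` with `j ≤ l` are positive, so Newton's inequality makes `H_{j-1} / H_j`
nondecreasing for `j ≤ l`. The hypothesis says that this ratio takes the same value at `k` and at
`l`, so it is constant on `[k, l]`, which is the equality case of Newton's inequality at `k`.
-/

open Polynomial

namespace Multiset

section CommSemiring

variable {R : Type*} [CommSemiring R]

theorem esymm_cons_succ (a : R) (s : Multiset R) (j : ℕ) :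
    (a ::ₘ s).esymm (j + 1) = s.esymm (j + 1) + a * s.esymm j := by
  simp [esymm, map_map, sum_map_mul_left]

theorem esymm_one_eq_sum (s : Multiset R) : s.esymm 1 = s.sum := by
  simp [esymm, powersetCard_one]

theorem esymm_replicate (m j : ℕ) (c : R) : (replicate m c).esymm j = m.choose j * c ^ j := by
  induction m generalizing j with
  | zero => cases j <;> simp [esymm, powersetCard_zero_right]
  | succ m ih =>
    cases j with
    | zero => simp [esymm]
    | succ j =>
      rw [replicate_succ, esymm_cons_succ, ih, ih, Nat.choose_succ_succ']
      push_cast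
      ring

variable {ι : Type*} [Fintype ι] [DecidableEq ι] (ν : ι → R)

theorem esymm_map_univ_eq_sum_compl {i j : ℕ} (h : i + j = Fintype.card ι) :
    (univ.val.map ν).esymm i = ∑ u ∈ Finset.powersetCard j univ, ∏ k ∈ uᶜ, ν k := by
  rw [Finset.esymm_map_val]
  refine Finset.sum_nbij' (fun u => uᶜ) (fun u => uᶜ) ?_ ?_ ?_ ?_ ?_ <;>
    simp +contextual [card_compl]
  all_goals omega

theorem esymm_map_univ_card : (univ.val.map ν).esymm (Fintype.card ι) = ∏ k, ν k := by
  simp [esymm_map_univ_eq_sum_compl ν (j := 0) (add_zero _)]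

theorem prod_compl_singleton_mul_prod_compl_singleton {a b : ι} (hab : a ≠ b) :
    (∏ k ∈ {a}ᶜ, ν k) * ∏ k ∈ {b}ᶜ, ν k = (∏ k ∈ {a, b}ᶜ, ν k) * ∏ k, ν k := by
  have ha : ∏ k ∈ {a}ᶜ, ν k = ν b * ∏ k ∈ {a, b}ᶜ, ν k := by
    rw [Finset.pair_comm, compl_insert, mul_prod_erase _ _ (by simpa using hab.symm)]
  have hb : ∏ k ∈ {b}ᶜ, ν k = ν a * ∏ k ∈ {a, b}ᶜ, ν k := by
    rw [compl_insert, mul_prod_erase _ _ (by simpa using hab)]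
  rw [ha, hb, ← prod_compl_mul_prod {a, b}, Finset.prod_pair hab]
  ring

theorem esymm_one_map_prod_compl_singleton {r : ℕ} (h : Fintype.card ι = r + 1) :
    (univ.val.map fun i => ∏ k ∈ {i}ᶜ, ν k).esymm 1 = (univ.val.map ν).esymm r := by
  rw [esymm_one_eq_sum, esymm_map_univ_eq_sum_compl ν (j := 1) (by omega),
    Finset.powersetCard_one, Finset.sum_map]
  rfl

theorem esymm_two_map_prod_compl_singleton {r : ℕ} (h : Fintype.card ι = r + 2) :
    (univ.val.map fun i => ∏ k ∈ {i}ᶜ, ν k).esymm 2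
      = (univ.val.map ν).esymm r * (univ.val.map ν).esymm (r + 2) := by
  rw [Finset.esymm_map_val, esymm_map_univ_eq_sum_compl ν (j := 2) (by omega), ← h,
    esymm_map_univ_card, Finset.sum_mul]
  refine Finset.sum_congr rfl fun u hu => ?_
  obtain ⟨a, b, hab, rfl⟩ := Finset.card_eq_two.1 (Finset.mem_powersetCard_univ.1 hu)
  rw [Finset.prod_pair hab, prod_compl_singleton_mul_prod_compl_singleton ν hab]

end CommSemiring

theorem sum_map_mul_sub_sq {R : Type*} [CommRing R] (s : Multiset R) (a b : R) :
    (s.map fun x => (a * x - b) ^ 2).sum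
      = a ^ 2 * (s.sum ^ 2 - 2 * s.esymm 2) - 2 * a * b * s.sum + card s * b ^ 2 := by
  induction s using Multiset.induction_on with
  | empty => simp [esymm, powersetCard_zero_right 1]
  | cons y s ih =>
    rw [map_cons, sum_cons, ih, sum_cons, card_cons, esymm_cons_succ, esymm_one_eq_sum]
    push_cast
    ring

theorem sum_map_card_mul_sub_sum_sq (s : Multiset ℝ) :
    (s.map fun x => (card s * x - s.sum) ^ 2).sum
      = card s * ((card s - 1) * s.esymm 1 ^ 2 - 2 * card s * s.esymm 2) := by
  rw [sum_map_mul_sub_sq, esymm_one_eq_sum]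
  ring

theorem two_mul_card_mul_esymm_two_le (s : Multiset ℝ) :
    2 * card s * s.esymm 2 ≤ (card s - 1) * s.esymm 1 ^ 2 := by
  rcases eq_or_ne s 0 with rfl | hs
  · simp [esymm, powersetCard_zero_right]
  have hm : (0 : ℝ) < card s := by exact_mod_cast card_pos.2 hs
  have hsq : 0 ≤ (s.map fun x => (card s * x - s.sum) ^ 2).sum :=
    sum_nonneg fun _ hy => by obtain ⟨x, -, rfl⟩ := mem_map.1 hy; positivity
  rw [sum_map_card_mul_sub_sum_sq] at hsq
  nlinarith

theorem card_mul_eq_sum_of_esymm_two_eq {s : Multiset ℝ}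
    (h : 2 * card s * s.esymm 2 = (card s - 1) * s.esymm 1 ^ 2) :
    ∀ x ∈ s, card s * x = s.sum := by
  have hsum : (s.map fun x => (card s * x - s.sum) ^ 2).sum = 0 := by
    rw [sum_map_card_mul_sub_sum_sq, h]
    ring
  intro x hx
  have hle := single_le_sum (fun _ hy => by obtain ⟨y, -, rfl⟩ := mem_map.1 hy; positivity) _
    (mem_map_of_mem (fun x => (card s * x - s.sum) ^ 2) hx)
  rw [hsum] at hle
  exact sub_eq_zero.1 (pow_eq_zero_iff two_ne_zero |>.1 (le_antisymm hle (sq_nonneg _)))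

section Fintype

variable {ι : Type*} [Fintype ι] [DecidableEq ι] (ν : ι → ℝ)

theorem two_mul_esymm_mul_esymm_le_of_card_eq {r : ℕ} (h : Fintype.card ι = r + 2) :
    2 * (r + 2) * ((univ.val.map ν).esymm r * (univ.val.map ν).esymm (r + 2))
      ≤ (r + 1) * (univ.val.map ν).esymm (r + 1) ^ 2 := by
  have key := two_mul_card_mul_esymm_two_le (univ.val.map fun i => ∏ k ∈ {i}ᶜ, ν k)
  rw [card_map, Finset.card_val, Finset.card_univ, h,
    esymm_one_map_prod_compl_singleton ν (r := r + 1) h,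
    esymm_two_map_prod_compl_singleton ν h] at key
  push_cast at key
  linarith

theorem eq_of_two_mul_esymm_mul_esymm_eq {r : ℕ} (h : Fintype.card ι = r + 2)
    (heq : 2 * (r + 2) * ((univ.val.map ν).esymm r * (univ.val.map ν).esymm (r + 2))
      = (r + 1) * (univ.val.map ν).esymm (r + 1) ^ 2)
    (h0 : (univ.val.map ν).esymm (r + 2) ≠ 0) (a b : ι) : ν a = ν b := by
  have hP := card_mul_eq_sum_of_esymm_two_eq (s := univ.val.map fun i => ∏ k ∈ {i}ᶜ, ν k) (by
    rw [card_map, Finset.card_val, Finset.card_univ, h,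
      esymm_one_map_prod_compl_singleton ν (r := r + 1) h, esymm_two_map_prod_compl_singleton ν h]
    push_cast
    linarith)
  have hprod : ∀ a, ν a * ∏ k ∈ {a}ᶜ, ν k = (univ.val.map ν).esymm (r + 2) := fun a => by
    rw [← h, esymm_map_univ_card, ← Finset.prod_mul_prod_compl {a}, Finset.prod_singleton]
  have hPab : ∏ k ∈ {a}ᶜ, ν k = ∏ k ∈ {b}ᶜ, ν k :=
    mul_left_cancel₀ (by simp [h]; positivity)
      ((hP _ (mem_map_of_mem _ (Finset.mem_univ_val a))).trans
        (hP _ (mem_map_of_mem _ (Finset.mem_univ_val b))).symm)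
  have hPa : ∏ k ∈ {a}ᶜ, ν k ≠ 0 := fun h' => h0 (by rw [← hprod a, h', mul_zero])
  exact mul_right_cancel₀ hPa (by rw [hprod a, hPab, hprod b])

end Fintype

noncomputable def esymmMean (s : Multiset ℝ) (r : ℕ) : ℝ :=
  s.esymm r / (card s).choose r

theorem esymmMean_replicate {m j : ℕ} (hj : j ≤ m) (c : ℝ) :
    (replicate m c).esymmMean j = c ^ j := by
  rw [esymmMean, esymm_replicate, card_replicate,
    mul_div_cancel_left₀ _ (by exact_mod_cast (Nat.choose_pos hj).ne')]

theorem eq_replicate_of_esymmMean_one_two {s : Multiset ℝ} (hs : 2 ≤ card s) {c : ℝ}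
    (h1 : s.esymmMean 1 = c) (h2 : s.esymmMean 2 = c ^ 2) : s = replicate (card s) c := by
  have hm : (0 : ℝ) < card s := by exact_mod_cast (by omega : 0 < card s)
  have hm1 : (0 : ℝ) < card s - 1 := by
    have : (2 : ℝ) ≤ card s := by exact_mod_cast hs
    linarith
  rw [esymmMean, Nat.choose_one_right, div_eq_iff hm.ne'] at h1
  rw [esymmMean, Nat.cast_choose_two, div_eq_iff (by positivity)] at h2
  have hconst := card_mul_eq_sum_of_esymm_two_eq (by rw [h1, h2]; ring)
  refine eq_replicate.2 ⟨rfl, fun x hx => mul_left_cancel₀ hm.ne' ?_⟩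
  rw [hconst x hx, ← esymm_one_eq_sum, h1, mul_comm]

theorem exists_esymm_derivative {s : Multiset ℝ} {m : ℕ} (hs : card s = m + 1) :
    ∃ t : Multiset ℝ, card t = m ∧
      ∀ j ≤ m, (m + 1 : ℝ) * t.esymm j = (m + 1 - j : ℝ) * s.esymm j := by
  set p := (s.map fun a => X - C a).prod
  have hp : p.natDegree = m + 1 := by rw [natDegree_multiset_prod_X_sub_C_eq_card, hs]
  have hmonic : p.Monic := monic_multiset_prod_of_monic _ _ fun a _ => monic_X_sub_C a
  have hq : (derivative p).natDegree = m := by rw [natDegree_derivative, hp]; rfl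
  have hroots : card (derivative p).roots = (derivative p).natDegree := by
    refine le_antisymm (card_roots' _) ?_
    have := card_roots_le_derivative p
    rw [roots_multiset_prod_X_sub_C, hs] at this
    omega
  refine ⟨(derivative p).roots, hroots.trans hq, fun j hj => ?_⟩
  have hcoeff := coeff_eq_esymm_roots_of_card hroots (k := m - j) (by omega)
  rw [leadingCoeff_derivative, hmonic.leadingCoeff, hp, hq, coeff_derivative,
    prod_X_sub_C_coeff s (by omega), hs, Nat.sub_sub_self hj,
    show m + 1 - (m - j + 1) = j by omega] at hcoeff
  push_cast [Nat.cast_sub hj] at hcoeff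
  refine mul_left_cancel₀ (pow_ne_zero j (neg_ne_zero.2 one_ne_zero)) ?_
  linear_combination -hcoeff

theorem exists_esymmMean_derivative {s : Multiset ℝ} {m : ℕ} (hs : card s = m + 1) :
    ∃ t : Multiset ℝ, card t = m ∧ ∀ j ≤ m, t.esymmMean j = s.esymmMean j := by
  obtain ⟨t, ht, hts⟩ := exists_esymm_derivative hs
  refine ⟨t, ht, fun j hj => ?_⟩
  have hchoose : (m.choose j * (m + 1) : ℝ) = (m + 1).choose j * (m + 1 - j) := by
    have h := congrArg (Nat.cast (R := ℝ)) (Nat.choose_mul_succ_eq m j)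
    push_cast [Nat.cast_sub (by omega : j ≤ m + 1)] at h
    exact h
  have hmj : (0 : ℝ) < m + 1 - j := by
    have : (j : ℝ) ≤ m := by exact_mod_cast hj
    linarith
  have hc : (0 : ℝ) < m.choose j := by exact_mod_cast Nat.choose_pos hj
  rw [esymmMean, esymmMean, ht, hs, div_eq_div_iff hc.ne'
    (Nat.cast_ne_zero.2 (Nat.choose_pos (by omega)).ne')]
  refine mul_right_cancel₀ hmj.ne' ?_
  linear_combination (m.choose j : ℝ) * hts j hj - t.esymm j * hchoose

theorem exists_esymmMean_eq_of_le_card (s : Multiset ℝ) {m : ℕ} (hm : m ≤ card s) :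
    ∃ t : Multiset ℝ, card t = m ∧ ∀ j ≤ m, t.esymmMean j = s.esymmMean j := by
  induction hm using Nat.decreasingInduction with
  | self => exact ⟨s, rfl, fun _ _ => rfl⟩
  | of_succ m _ ih =>
    obtain ⟨t, ht, hts⟩ := ih
    obtain ⟨u, hu, hut⟩ := exists_esymmMean_derivative ht
    exact ⟨u, hu, fun j hj => (hut j hj).trans (hts j (by omega))⟩

theorem esymmMean_mul_sub_sq_of_card_eq {t : Multiset ℝ} {r : ℕ} (ht : card t = r + 2) :
    t.esymmMean r * t.esymmMean (r + 2) - t.esymmMean (r + 1) ^ 2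
      = (2 * (r + 2) * (t.esymm r * t.esymm (r + 2)) - (r + 1) * t.esymm (r + 1) ^ 2)
        / ((r + 1) * (r + 2) ^ 2) := by
  have hr : ((r + 2).choose r : ℝ) = (r + 2) * (r + 1) / 2 := by
    rw [Nat.choose_symm_add, Nat.cast_choose_two]
    push_cast
    ring
  rw [esymmMean, esymmMean, esymmMean, ht, hr, Nat.choose_succ_self_right, Nat.choose_self]
  field_simp
  push_cast
  ring

theorem esymmMean_mul_esymmMean_add_two_le_sq (s : Multiset ℝ) {r : ℕ} (hr : r + 2 ≤ card s) :
    s.esymmMean r * s.esymmMean (r + 2) ≤ s.esymmMean (r + 1) ^ 2 := by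
  classical
  obtain ⟨t, ht, hts⟩ := exists_esymmMean_eq_of_le_card s hr
  have key := two_mul_esymm_mul_esymm_le_of_card_eq (fun x : t => (x : ℝ)) (by rw [card_coe, ht])
  rw [map_univ_coe] at key
  rw [← hts r (by omega), ← hts (r + 1) (by omega), ← hts (r + 2) le_rfl, ← sub_nonpos,
    esymmMean_mul_sub_sq_of_card_eq ht]
  exact div_nonpos_of_nonpos_of_nonneg (by linarith) (by positivity)

theorem exists_eq_replicate_of_esymmMean_mul_eq_sq {s : Multiset ℝ} {r : ℕ}
    (hr : r + 2 ≤ card s) (h : s.esymmMean r * s.esymmMean (r + 2) = s.esymmMean (r + 1) ^ 2)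
    (h0 : s.esymmMean (r + 2) ≠ 0) : ∃ c, s = replicate (card s) c := by
  classical
  obtain ⟨t, ht, hts⟩ := exists_esymmMean_eq_of_le_card s hr
  rw [← hts r (by omega), ← hts (r + 1) (by omega), ← hts (r + 2) le_rfl, ← sub_eq_zero,
    esymmMean_mul_sub_sq_of_card_eq ht, div_eq_zero_iff] at h
  rw [← hts (r + 2) le_rfl, esymmMean, div_ne_zero_iff] at h0
  have hconst := eq_of_two_mul_esymm_mul_esymm_eq (fun x : t => (x : ℝ)) (by rw [card_coe, ht])
  rw [map_univ_coe] at hconst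
  obtain ⟨a⟩ : Nonempty t := Fintype.card_pos_iff.1 (by rw [card_coe]; omega)
  obtain ⟨c, htc⟩ : ∃ c : ℝ, t = replicate (r + 2) c := by
    refine ⟨a, ht ▸ eq_replicate_of_mem fun x hx => ?_⟩
    rw [← map_univ_coe t, mem_map] at hx
    obtain ⟨b, -, rfl⟩ := hx
    exact hconst (sub_eq_zero.1 (h.resolve_right (by positivity))) h0.1 b a
  refine ⟨c, eq_replicate_of_esymmMean_one_two (by omega) ?_ ?_⟩
  · rw [← hts 1 (by omega), htc, esymmMean_replicate (by omega), pow_one]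
  · rw [← hts 2 (by omega), htc, esymmMean_replicate (by omega)]

end Multiset

theorem monotoneOn_div_succ_of_mul_le_sq {f : ℕ → ℝ} {b : ℕ} (hpos : ∀ j ≤ b + 1, 0 < f j)
    (hf : ∀ j < b, f j * f (j + 2) ≤ f (j + 1) ^ 2) :
    MonotoneOn (fun j => f j / f (j + 1)) (Set.Iic b) := by
  refine monotoneOn_of_le_succ Set.ordConnected_Iic fun j _ hj hj1 => ?_
  simp only [Order.succ_eq_add_one, Set.mem_Iic] at hj hj1 ⊢
  rw [div_le_div_iff₀ (hpos _ (by omega)) (hpos _ (by omega))]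
  nlinarith [hf j (by omega)]

theorem mul_add_two_eq_sq_of_mul_eq {f : ℕ → ℝ} {a b : ℕ} (hpos : ∀ j ≤ b + 1, 0 < f j)
    (hf : ∀ j < b, f j * f (j + 2) ≤ f (j + 1) ^ 2) (hab : a < b)
    (h : f a * f (b + 1) = f (a + 1) * f b) : f a * f (a + 2) = f (a + 1) ^ 2 := by
  have hmono := monotoneOn_div_succ_of_mul_le_sq hpos hf
  have hratio : f a / f (a + 1) = f b / f (b + 1) := by
    rw [div_eq_div_iff (hpos _ (by omega)).ne' (hpos _ le_rfl).ne']
    linarith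
  have hup : f a / f (a + 1) ≤ f (a + 1) / f (a + 2) :=
    hmono (Set.mem_Iic.2 hab.le) (Set.mem_Iic.2 hab) (Nat.le_succ a)
  have hdown : f (a + 1) / f (a + 2) ≤ f a / f (a + 1) :=
    hratio ▸ hmono (Set.mem_Iic.2 hab) (Set.mem_Iic.2 le_rfl) hab
  have h := le_antisymm hup hdown
  rw [div_eq_div_iff (hpos _ (by omega)).ne' (hpos _ (by omega)).ne'] at h
  linarith

theorem Hmc_eq_esymmMean (n : ℕ) (κ : Fin n → ℝ) (j : ℕ) :
    Hmc n κ j = (univ.val.map κ).esymmMean j := by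
  rw [Hmc, Multiset.esymmMean, Finset.esymm_map_val]
  simp [esymm]

theorem map_univ_val_eq_replicate_iff {ι α : Type*} [Fintype ι] (f : ι → α) (c : α) :
    univ.val.map f = Multiset.replicate (Fintype.card ι) c ↔ ∀ i, f i = c := by
  simp [Multiset.eq_replicate]

theorem Hmc_eq_pow_of_forall_eq {n j : ℕ} {κ : Fin n → ℝ} {c : ℝ} (hκ : ∀ i, κ i = c)
    (hj : j ≤ n) : Hmc n κ j = c ^ j := by
  rw [Hmc_eq_esymmMean, (map_univ_val_eq_replicate_iff κ c).2 hκ,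
    Multiset.esymmMean_replicate (by simpa using hj)]

theorem Hmc_mul_Hmc_add_two_le_sq {n r : ℕ} (κ : Fin n → ℝ) (hr : r + 2 ≤ n) :
    Hmc n κ r * Hmc n κ (r + 2) ≤ Hmc n κ (r + 1) ^ 2 := by
  simp only [Hmc_eq_esymmMean]
  exact Multiset.esymmMean_mul_esymmMean_add_two_le_sq _ (by simpa using hr)

theorem exists_forall_eq_of_Hmc_mul_eq_sq {n r : ℕ} {κ : Fin n → ℝ} (hr : r + 2 ≤ n)
    (h : Hmc n κ r * Hmc n κ (r + 2) = Hmc n κ (r + 1) ^ 2) (h0 : Hmc n κ (r + 2) ≠ 0) :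
    ∃ c, ∀ i, κ i = c := by
  simp only [Hmc_eq_esymmMean] at h h0
  obtain ⟨c, hc⟩ := Multiset.exists_eq_replicate_of_esymmMean_mul_eq_sq (by simpa using hr) h h0
  exact ⟨c, (map_univ_val_eq_replicate_iff κ c).1 (by simpa using hc)⟩

theorem Hmc_pos {n l j : ℕ} {κ : Fin n → ℝ} (hκ : ∀ i, 1 ≤ i → i ≤ l → 0 < esymm n κ i)
    (hl : l ≤ n) (hj : j ≤ l) : 0 < Hmc n κ j := by
  refine div_pos ?_ (Nat.cast_pos.2 (Nat.choose_pos (by omega)))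
  rcases Nat.eq_zero_or_pos j with rfl | hj0
  · simp [esymm]
  · exact hκ j hj0 hj

theorem newton_maclaurin_eq_general (n l k : ℕ) (hl : l ≤ n)
    (hk : 1 ≤ k) (hkl : k < l)
    (κ : Fin n → ℝ) (hκ : ∀ i, 1 ≤ i → i ≤ l → 0 < esymm n κ i) :
    Hmc n κ (k - 1) * Hmc n κ l = Hmc n κ k * Hmc n κ (l - 1) ↔
      ∃ c : ℝ, 0 < c ∧ ∀ i, κ i = c := by
  obtain ⟨a, rfl⟩ : ∃ a, k = a + 1 := ⟨k - 1, by omega⟩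
  obtain ⟨b, rfl⟩ : ∃ b, l = b + 1 := ⟨l - 1, by omega⟩
  have hpos : ∀ j ≤ b + 1, 0 < Hmc n κ j := fun j hj => Hmc_pos hκ hl hj
  simp only [Nat.add_sub_cancel]
  constructor
  · intro h
    have hsq := mul_add_two_eq_sq_of_mul_eq hpos
      (fun j hj => Hmc_mul_Hmc_add_two_le_sq κ (by omega)) (by omega) h
    obtain ⟨c, hc⟩ := exists_forall_eq_of_Hmc_mul_eq_sq (by omega) hsq (hpos _ (by omega)).ne'
    refine ⟨c, ?_, hc⟩
    simpa [Hmc_eq_pow_of_forall_eq hc (by omega : 1 ≤ n)] using hpos 1 (by omega)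
  · rintro ⟨c, -, hc⟩
    rw [Hmc_eq_pow_of_forall_eq hc (by omega), Hmc_eq_pow_of_forall_eq hc hl,
      Hmc_eq_pow_of_forall_eq hc (by omega), Hmc_eq_pow_of_forall_eq hc (by omega)]
    ring

/-- Equality case of the Newton–MacLaurin inequality: for `κ ∈ Γ_l⁺` and `1 ≤ k < l ≤ n`,
`H_{k-1}·H_l = H_k·H_{l-1}` holds iff `κ = c·(1,…,1)` for some constant `c > 0`. -/
theorem newton_maclaurin_eq (n l k : ℕ) (hn : 2 ≤ n) (hl : l ≤ n)
    (hk : 1 ≤ k) (hkl : k < l)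
    (κ : Fin n → ℝ) (hκ : ∀ i, 1 ≤ i → i ≤ l → 0 < esymm n κ i) :
    Hmc n κ (k - 1) * Hmc n κ l = Hmc n κ k * Hmc n κ (l - 1) ↔
      ∃ c : ℝ, 0 < c ∧ ∀ i, κ i = c :=
  newton_maclaurin_eq_general n l k hl hk hkl κ hκ
end

section
/- Let n ≥ 1, let 0 ≤ r ≤ n−2, and let κ ∈ ℝ^n satisfy σ_i(κ) > 0 for all 1 ≤ i ≤ r+1. Then H_1(κ)·H_{r+1}(κ) ≥ H_{r+2}(κ), where H_j(κ) = σ_j(κ)/C(n,j). (Note that only positivity of σ_1,…,σ_{r+1} is assumed; σ_{r+2} may be nonpositive.) -/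
open Finset

lemma two_mul_esymm_two_add {ι : Type*} [DecidableEq ι] (s : Finset ι) (a : ι → ℝ) :
    2 * ∑ t ∈ s.powersetCard 2, ∏ i ∈ t, a i + ∑ i ∈ s, a i ^ 2 = (∑ i ∈ s, a i) ^ 2 := by
  induction s using Finset.induction with
  | empty => rw [Finset.powersetCard_eq_empty.mpr (by simp)]; simp
  | @insert x s hx ih =>
    rw [Finset.powersetCard_succ_insert hx]
    rw [Finset.sum_union ?hd, Finset.sum_image ?hinj, Finset.sum_insert hx, Finset.sum_insert hx]
    case hd =>
      rw [Finset.disjoint_left]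
      intro t ht ht'
      obtain ⟨u, hu, rfl⟩ := Finset.mem_image.mp ht'
      exact hx ((Finset.mem_powersetCard.mp ht).1 (Finset.mem_insert_self x u))
    case hinj =>
      intro t1 h1 t2 h2 he
      have hx1 : x ∉ t1 := fun h => hx ((Finset.mem_powersetCard.mp h1).1 h)
      have hx2 : x ∉ t2 := fun h => hx ((Finset.mem_powersetCard.mp h2).1 h)
      rw [← Finset.erase_insert hx1, ← Finset.erase_insert hx2, he]
    have hins : ∀ t ∈ s.powersetCard 1, ∏ i ∈ insert x t, a i = a x * ∏ i ∈ t, a i := by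
      intro t ht
      exact Finset.prod_insert (fun h => hx ((Finset.mem_powersetCard.mp ht).1 h))
    rw [Finset.sum_congr rfl hins, Finset.powersetCard_one, Finset.sum_map]
    simp only [Function.Embedding.coeFn_mk, Finset.prod_singleton, ← Finset.mul_sum]
    linear_combination ih

lemma esymm_eq_multiset (n : ℕ) (κ : Fin n → ℝ) (r : ℕ) :
    esymm n κ r = (Multiset.map κ (univ : Finset (Fin n)).val).esymm r :=
  (Finset.esymm_map_val κ univ r).symm

lemma esymm_compl (n r : ℕ) (hr : r ≤ n) (κ : Fin n → ℝ) :
    ∑ s ∈ powersetCard r (univ : Finset (Fin n)), ∏ i ∈ sᶜ, κ i = esymm n κ (n - r) := by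
  unfold esymm
  refine Finset.sum_nbij' (fun s => sᶜ) (fun s => sᶜ) ?_ ?_ ?_ ?_ ?_
  · intro s hs
    rw [Finset.mem_powersetCard_univ] at hs ⊢
    rw [Finset.card_compl, hs, Fintype.card_fin]
  · intro s hs
    rw [Finset.mem_powersetCard_univ] at hs ⊢
    rw [Finset.card_compl, hs, Fintype.card_fin]
    omega
  · intro s _; exact compl_compl s
  · intro s _; exact compl_compl s
  · intro s _; rfl

lemma newton_base (k : ℕ) (κ : Fin (k+2) → ℝ) :
    Hmc (k+2) κ k * Hmc (k+2) κ (k+2) ≤ Hmc (k+2) κ (k+1) ^ 2 := by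
  set a : Fin (k+2) → ℝ := fun i => ∏ j ∈ ({i} : Finset (Fin (k+2)))ᶜ, κ j with ha
  have hpc : powersetCard (k+2) (univ : Finset (Fin (k+2))) = {(univ : Finset (Fin (k+2)))} := by
    have := Finset.powersetCard_self (univ : Finset (Fin (k+2)))
    rwa [Finset.card_univ, Fintype.card_fin] at this
  have hB3 : esymm (k+2) κ (k+2) = ∏ j, κ j := by
    unfold esymm
    rw [hpc, Finset.sum_singleton]
  have hB1 : esymm (k+2) κ (k+1) = ∑ i, a i := by
    have h := esymm_compl (k+2) 1 (by omega) κ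
    rw [show k + 2 - 1 = k + 1 from rfl] at h
    rw [← h, Finset.powersetCard_one, Finset.sum_map]
    rfl
  have hB2 : esymm (k+2) κ k * esymm (k+2) κ (k+2) = esymm (k+2) a 2 := by
    have h := esymm_compl (k+2) 2 (by omega) κ
    rw [show k + 2 - 2 = k from rfl] at h
    rw [← h, Finset.sum_mul]
    show _ = ∑ t ∈ powersetCard 2 (univ : Finset (Fin (k+2))), ∏ i ∈ t, a i
    refine Finset.sum_congr rfl ?_
    intro t ht
    have hcard : t.card = 2 := Finset.mem_powersetCard_univ.mp ht
    obtain ⟨i, j, hij, rfl⟩ := Finset.card_eq_two.mp hcard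
    have hins : ∀ x y : Fin (k+2), x ≠ y →
        ({x} : Finset (Fin (k+2)))ᶜ = insert y ({x, y} : Finset (Fin (k+2)))ᶜ := by
      intro x y hxy
      ext z
      simp only [Finset.mem_compl, Finset.mem_singleton, Finset.mem_insert]
      constructor
      · intro hz
        by_cases hzy : z = y
        · exact Or.inl hzy
        · exact Or.inr (by simp [hz, hzy])
      · rintro (rfl | hz)
        · exact hxy.symm
        · exact fun h => hz (Or.inl h)
    have hai : a i = κ j * ∏ x ∈ ({i, j} : Finset (Fin (k+2)))ᶜ, κ x := by
      rw [ha]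
      dsimp only
      rw [hins i j hij, Finset.prod_insert (by simp)]
    have haj : a j = κ i * ∏ x ∈ ({i, j} : Finset (Fin (k+2)))ᶜ, κ x := by
      rw [ha]
      dsimp only
      rw [hins j i hij.symm, Finset.prod_insert (by simp),
        show ({j, i} : Finset (Fin (k+2))) = {i, j} by ext z; simp [or_comm]]
    have hprod : (∏ x ∈ ({i, j} : Finset (Fin (k+2)))ᶜ, κ x) * ∏ x ∈ ({i, j} : Finset (Fin (k+2))), κ x
        = ∏ x, κ x := Finset.prod_compl_mul_prod _ _
    rw [hB3, Finset.prod_pair hij, hai, haj, ← hprod, Finset.prod_pair hij]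
    ring
  -- inequality ingredients
  have hCS : (∑ i, a i) ^ 2 ≤ ((k:ℝ)+2) * ∑ i, (a i) ^ 2 := by
    have h := sq_sum_le_card_mul_sum_sq (s := (univ : Finset (Fin (k+2)))) (f := a)
    have hc : ((univ : Finset (Fin (k+2))).card : ℝ) = (k:ℝ)+2 := by
      rw [Finset.card_univ, Fintype.card_fin]; push_cast; ring
    rw [hc] at h
    exact h
  have hsq := two_mul_esymm_two_add (univ : Finset (Fin (k+2))) a
  have hE2 : esymm (k+2) a 2 = ∑ t ∈ powersetCard 2 (univ : Finset (Fin (k+2))), ∏ i ∈ t, a i := rfl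
  have hc1 : ((k+2).choose (k+1) : ℝ) = (k:ℝ)+2 := by
    rw [Nat.choose_succ_self_right]; push_cast; ring
  have hc2 : 2 * ((k+2).choose k : ℝ) = ((k:ℝ)+2) * ((k:ℝ)+1) := by
    have h1 : (k+2).choose k = (k+2).choose 2 := by
      conv_lhs => rw [show k = k + 2 - 2 from rfl]
      exact Nat.choose_symm (by omega)
    have h2 : (k+2) * (k+1).choose 1 = (k+2).choose 2 * 2 := by
      have := Nat.add_one_mul_choose_eq (k+1) 1
      simpa using this
    rw [Nat.choose_one_right] at h2
    have h3 : ((k:ℝ)+2) * ((k:ℝ)+1) = ((k+2).choose 2 : ℝ) * 2 := by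
      exact_mod_cast congrArg (Nat.cast : ℕ → ℝ) h2
    rw [h1]
    linarith
  have hc3 : (((k+2)).choose (k+2) : ℝ) = 1 := by rw [Nat.choose_self]; norm_num
  have hck_pos : (0:ℝ) < ((k+2).choose k : ℝ) := by
    exact_mod_cast Nat.choose_pos (by omega : k ≤ k + 2)
  simp only [Hmc]
  rw [hc3, hc1, hB1, div_one, div_mul_eq_mul_div, div_pow,
    div_le_div_iff₀ hck_pos (by positivity)]
  rw [hB2, hE2]
  set P : ℝ := ∑ i, a i
  set Q : ℝ := ∑ i, (a i) ^ 2
  set E2 : ℝ := ∑ t ∈ powersetCard 2 (univ : Finset (Fin (k+2))), ∏ i ∈ t, a i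
  have hNQ : ((k:ℝ)+2) * P ^ 2 ≤ ((k:ℝ)+2) * (((k:ℝ)+2) * Q) :=
    mul_le_mul_of_nonneg_left hCS (by positivity)
  nlinarith [hsq, hNQ, hc2]

open Polynomial in
lemma esymm_step (n : ℕ) (κ : Fin (n+1) → ℝ) :
    ∃ κ' : Fin n → ℝ, ∀ j, j ≤ n →
      ((n:ℝ)+1) * esymm n κ' j = (((n+1-j : ℕ)) : ℝ) * esymm (n+1) κ j := by
  classical
  set M : Multiset ℝ := Multiset.map κ (univ : Finset (Fin (n+1))).val with hM
  have hcard : Multiset.card M = n + 1 := by rw [hM]; simp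
  set p : ℝ[X] := (M.map fun a => X - C a).prod with hp
  have hmonic : p.Monic :=
    monic_multiset_prod_of_monic _ _ (fun a _ => monic_X_sub_C a)
  have hpdeg : p.natDegree = n + 1 := by
    rw [hp, natDegree_multiset_prod_X_sub_C_eq_card, hcard]
  have hproots : p.roots = M := by rw [hp]; exact roots_multiset_prod_X_sub_C M
  set q := derivative p with hq
  have hptop : p.coeff (n+1) = 1 := by
    have := hmonic.coeff_natDegree
    rwa [hpdeg] at this
  have hqn : q.coeff n = (n:ℝ)+1 := by
    rw [hq, coeff_derivative, hptop, one_mul]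
  have hqdeg : q.natDegree = n := by
    refine le_antisymm ?_ (le_natDegree_of_ne_zero (by rw [hqn]; positivity))
    have h := natDegree_derivative_le p
    rw [← hq, hpdeg] at h
    omega
  have hqroots_card : Multiset.card q.roots = n := by
    have h1 := card_roots_le_derivative p
    have h2 := card_roots' q
    rw [← hq, hproots, hcard] at h1
    rw [hqdeg] at h2
    omega
  have hsplit : C q.leadingCoeff * (q.roots.map fun a => X - C a).prod = q :=
    C_leadingCoeff_mul_prod_multiset_X_sub_C (hqroots_card.trans hqdeg.symm)
  have hlead : q.leadingCoeff = (n:ℝ)+1 := by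
    rw [← coeff_natDegree, hqdeg, hqn]
  have hlen : q.roots.toList.length = n := by
    rw [Multiset.length_toList, hqroots_card]
  refine ⟨fun i => q.roots.toList.get (Fin.cast hlen.symm i), ?_⟩
  have hofn : List.ofFn (fun i : Fin n => q.roots.toList.get (Fin.cast hlen.symm i))
      = q.roots.toList := by
    refine List.ext_getElem (by simp [hlen]) ?_
    intro m h1 h2
    simp [List.getElem_ofFn, List.get]
  have hmap : Multiset.map (fun i : Fin n => q.roots.toList.get (Fin.cast hlen.symm i))
      (univ : Finset (Fin n)).val = q.roots := by
    rw [Fin.univ_val_map, hofn, Multiset.coe_toList]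
  intro j hj
  have he' : esymm n (fun i => q.roots.toList.get (Fin.cast hlen.symm i)) j
      = q.roots.esymm j := by
    rw [esymm_eq_multiset, hmap]
  have heM : esymm (n+1) κ j = M.esymm j := by rw [esymm_eq_multiset, hM]
  have hv1 : p.coeff (n + 1 - j) = (-1:ℝ)^j * M.esymm j := by
    have h := Multiset.prod_X_sub_C_coeff M (k := n+1-j) (by rw [hcard]; omega)
    rw [hcard, show n+1 - (n+1-j) = j by omega] at h
    rw [hp]
    exact h
  have hv2 : (q.roots.map fun a => X - C a).prod.coeff (n - j)
      = (-1:ℝ)^j * q.roots.esymm j := by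
    have h := Multiset.prod_X_sub_C_coeff q.roots (k := n-j) (by rw [hqroots_card]; omega)
    rwa [hqroots_card, show n - (n-j) = j by omega] at h
  have hcoeff1 : q.coeff (n - j) = ((n:ℝ)+1) * ((-1:ℝ)^j * q.roots.esymm j) := by
    conv_lhs => rw [← hsplit]
    rw [coeff_C_mul, hv2, hlead]
  have hcoeff2 : q.coeff (n - j) = (-1:ℝ)^j * M.esymm j * (((n-j:ℕ):ℝ) + 1) := by
    rw [hq, coeff_derivative, show n - j + 1 = n + 1 - j by omega, hv1]
  have hcast : ((n+1-j : ℕ) : ℝ) = ((n-j:ℕ):ℝ) + 1 := by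
    exact_mod_cast congrArg (Nat.cast : ℕ → ℝ) (by omega : n+1-j = (n-j)+1)
  have hE : ((n:ℝ)+1) * ((-1:ℝ)^j * q.roots.esymm j)
      = (-1:ℝ)^j * M.esymm j * (((n-j:ℕ):ℝ) + 1) := by
    rw [← hcoeff1, hcoeff2]
  rw [he', heM, hcast]
  have hsign : ((-1:ℝ))^j ≠ 0 := pow_ne_zero j (by norm_num)
  refine mul_left_cancel₀ hsign ?_
  linear_combination hE

lemma esymm_zero' (n : ℕ) (κ : Fin n → ℝ) : esymm n κ 0 = 1 := by
  simp [esymm]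

lemma Hmc_step (m j : ℕ) (hj : j ≤ m) (κ : Fin (m+1) → ℝ) (κ' : Fin m → ℝ)
    (hs : ((m:ℝ)+1) * esymm m κ' j = ((m+1-j : ℕ) : ℝ) * esymm (m+1) κ j) :
    Hmc m κ' j = Hmc (m+1) κ j := by
  have hch : ((m.choose j : ℝ)) * ((m:ℝ)+1) = ((m+1).choose j : ℝ) * ((m+1-j : ℕ) : ℝ) := by
    exact_mod_cast congrArg (Nat.cast : ℕ → ℝ) (Nat.choose_mul_succ_eq m j)
  have h0 : (0:ℝ) < (m.choose j : ℝ) := by exact_mod_cast Nat.choose_pos hj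
  have h1 : (0:ℝ) < ((m+1).choose j : ℝ) := by exact_mod_cast Nat.choose_pos (by omega)
  rw [Hmc, Hmc, div_eq_div_iff h0.ne' h1.ne']
  refine mul_left_cancel₀ (show ((m:ℝ)+1) ≠ 0 by positivity) ?_
  linear_combination (((m+1).choose j : ℝ)) * hs - (esymm (m+1) κ j) * hch

theorem newton : ∀ n k (κ : Fin n → ℝ), k + 2 ≤ n →
    Hmc n κ k * Hmc n κ (k+2) ≤ Hmc n κ (k+1) ^ 2 := by
  intro n
  induction n with
  | zero => intro k κ hk; omega
  | succ m ih =>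
    intro k κ hk
    rcases eq_or_lt_of_le hk with he | hlt
    · obtain rfl : m = k + 1 := by omega
      exact newton_base k κ
    · have hk' : k + 2 ≤ m := by omega
      obtain ⟨κ', hκ'⟩ := esymm_step m κ
      have e0 : Hmc m κ' k = Hmc (m+1) κ k :=
        Hmc_step m k (by omega) κ κ' (hκ' k (by omega))
      have e1 : Hmc m κ' (k+1) = Hmc (m+1) κ (k+1) :=
        Hmc_step m (k+1) (by omega) κ κ' (hκ' (k+1) (by omega))
      have e2 : Hmc m κ' (k+2) = Hmc (m+1) κ (k+2) :=
        Hmc_step m (k+2) (by omega) κ κ' (hκ' (k+2) (by omega))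
      rw [← e0, ← e1, ← e2]
      exact ih k κ' hk'

/-- If `σ_i(κ) > 0` for `1 ≤ i ≤ r+1` (with `0 ≤ r ≤ n-2`), then
`H_1(κ)·H_{r+1}(κ) ≥ H_{r+2}(κ)`. -/
theorem H_one_mul_H_ge (n r : ℕ) (hn : 1 ≤ n) (hr : r ≤ n - 2) (κ : Fin n → ℝ)
    (hκ : ∀ i, 1 ≤ i → i ≤ r + 1 → 0 < esymm n κ i) :
    Hmc n κ 1 * Hmc n κ (r + 1) ≥ Hmc n κ (r + 2) := by
  have hr1n : r + 1 ≤ n := by omega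
  have hchoose_pos : ∀ j, j ≤ n → (0:ℝ) < (n.choose j : ℝ) := by
    intro j hj; exact_mod_cast Nat.choose_pos hj
  have hpos : ∀ j, 1 ≤ j → j ≤ r + 1 → 0 < Hmc n κ j := by
    intro j h1 h2
    exact div_pos (hκ j h1 h2) (hchoose_pos j (by omega))
  have hprod_pos : 0 < Hmc n κ 1 * Hmc n κ (r+1) :=
    mul_pos (hpos 1 le_rfl (by omega)) (hpos (r+1) (by omega) le_rfl)
  by_cases hn2 : r + 2 ≤ n
  · by_cases hsgn : 0 < esymm n κ (r+2)
    · -- all positive: chain of Newton inequalities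
      have hpos' : ∀ j, 1 ≤ j → j ≤ r + 2 → 0 < Hmc n κ j := by
        intro j h1 h2
        rcases eq_or_lt_of_le h2 with rfl2 | hlt
        · subst rfl2; exact div_pos hsgn (hchoose_pos _ hn2)
        · exact hpos j h1 (by omega)
      have hH0 : Hmc n κ 0 = 1 := by
        rw [Hmc, esymm_zero', Nat.choose_zero_right]; norm_num
      have claim : ∀ k, k ≤ r + 1 → Hmc n κ (k+1) ≤ Hmc n κ 1 * Hmc n κ k := by
        intro k
        induction k with
        | zero => intro _; rw [hH0, mul_one]
        | succ k ihk =>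
          intro hk1
          have hnew := newton n k κ (by omega)
          have ih' := ihk (by omega)
          have hk0 : 0 < Hmc n κ k := by
            rcases Nat.eq_zero_or_pos k with rfl | hkpos
            · rw [hH0]; norm_num
            · exact hpos' k hkpos (by omega)
          have hk1' : 0 < Hmc n κ (k+1) := hpos' (k+1) (by omega) (by omega)
          nlinarith [hnew, ih', hk0, hk1', mul_pos hk0 hk1']
      exact claim (r+1) le_rfl
    · -- σ_{r+2} ≤ 0
      have : Hmc n κ (r+2) ≤ 0 := by
        rw [Hmc]
        apply div_nonpos_of_nonpos_of_nonneg (by linarith [not_lt.mp hsgn])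
        exact le_of_lt (hchoose_pos _ hn2)
      linarith
  · -- n = 1, r = 0 : esymm n κ (r+2) = 0
    have hd : n < r + 2 := by omega
    have : esymm n κ (r+2) = 0 := by
      rw [esymm, Finset.powersetCard_eq_empty.mpr (by simpa using hd), Finset.sum_empty]
    rw [ge_iff_le, Hmc, this, zero_div]
    exact le_of_lt hprod_pos
end
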